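/- arXiv:1101.4151 — 8 statements merged into one kernel-verified Lean document; each statement's English description precedes it below -/
import Mathlib

section
/- Let A be a family of subsets of {1,...,n} such that for all distinct A, B in the family, |A \ B| ≠ 2|B \ A|. Then for every l ≤ n/3, the sum over j from l to 2l of |A_j| / C(n,j) is at most 1, where A_j denotes the sets in the family of size exactly j. -/
/-!
Katona's permutation method. For `l ≤ j ≤ 2l` put `I_j = [j - l, 2j - l)`, a set of size `j`;
for `j < k` the set `I_k \ I_j` is exactly twice as large as `I_j \ I_k`. Hence for every
permutation `σ` of the ground set at most one of the sets `σ(I_j)` belongs to `𝒜`. For a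
uniformly random `σ`, `σ(I_j)` is a uniformly random `j`-set, so it lies in `𝒜` with
probability `|𝒜_j| / C(n, j)`; summing over `j` gives the bound.
-/

open Finset
open scoped Pointwise

theorem Finset.exists_perm_smul_eq_of_card_eq {α : Type*} [DecidableEq α] {s t : Finset α}
    (h : #s = #t) : ∃ π : Equiv.Perm α, π • s = t := by
  obtain ⟨π, hπ⟩ := (Set.powersetCard.isPretransitive (α := α) (n := #t)).exists_smul_eq
    ⟨s, Set.powersetCard.mem_iff.mpr h⟩ ⟨t, Set.powersetCard.mem_iff.mpr rfl⟩
  exact ⟨π, by simpa using congrArg Subtype.val hπ⟩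

section PermutationAveraging

variable {α : Type*} [Fintype α] [DecidableEq α]

theorem card_perm_smul_eq_congr (I : Finset α) {s t : Finset α} (h : #s = #t) :
    #{σ : Equiv.Perm α | σ • I = s} = #{σ : Equiv.Perm α | σ • I = t} := by
  obtain ⟨π, rfl⟩ := Finset.exists_perm_smul_eq_of_card_eq h
  exact card_nbij' (π * ·) (π⁻¹ * ·) (fun σ hσ ↦ by simp_all [mul_smul])
    (fun σ hσ ↦ by simp_all [mul_smul]) (fun _ _ ↦ by simp) (fun _ _ ↦ by simp)

theorem card_perm_smul_eq_mul_choose (I : Finset α) {s : Finset α} (hs : #s = #I) :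
    #{σ : Equiv.Perm α | σ • I = s} * (Fintype.card α).choose #I =
      (Fintype.card α).factorial := by
  have hmaps : Set.MapsTo (fun σ : Equiv.Perm α ↦ σ • I)
      ((univ : Finset (Equiv.Perm α)) : Set (Equiv.Perm α))
      (powersetCard #I (univ : Finset α)) := fun σ _ ↦ by simp
  have hfib := card_eq_sum_card_fiberwise hmaps
  rw [sum_congr rfl fun t ht ↦
      card_perm_smul_eq_congr I ((mem_powersetCard.mp ht).2.trans hs.symm),
    sum_const, card_powersetCard, card_univ, card_univ, Fintype.card_perm, smul_eq_mul] at hfib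
  rw [hfib, mul_comm]

theorem card_perm_smul_mem_mul_choose (𝒜 : Finset (Finset α)) (I : Finset α) :
    #{σ : Equiv.Perm α | σ • I ∈ 𝒜} * (Fintype.card α).choose #I =
      #{A ∈ 𝒜 | #A = #I} * (Fintype.card α).factorial := by
  have hmaps : Set.MapsTo (fun σ : Equiv.Perm α ↦ σ • I)
      ({σ : Equiv.Perm α | σ • I ∈ 𝒜} : Finset _)
      ({A ∈ 𝒜 | #A = #I} : Finset _) := fun σ hσ ↦ by simp_all
  rw [card_eq_sum_card_fiberwise hmaps, sum_mul, ← smul_eq_mul, ← sum_const]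
  refine sum_congr rfl fun A hA ↦ ?_
  rw [← card_perm_smul_eq_mul_choose I (mem_filter.mp hA).2, filter_filter]
  congr 2
  ext σ
  simp only [mem_filter, mem_univ, true_and]
  exact ⟨And.right, fun h ↦ ⟨h ▸ (mem_filter.mp hA).1, h⟩⟩

theorem sum_card_slice_div_choose_le_one (𝒜 : Finset (Finset α)) (J : Finset ℕ)
    (I : ℕ → Finset α) (hI : ∀ j ∈ J, #(I j) = j)
    (hchain : ∀ σ : Equiv.Perm α, ∀ j ∈ J, ∀ k ∈ J, σ • I j ∈ 𝒜 → σ • I k ∈ 𝒜 → j = k) :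
    ∑ j ∈ J, (#{A ∈ 𝒜 | #A = j} : ℝ) / (Fintype.card α).choose j ≤ 1 := by
  set N := (Fintype.card α).factorial
  have hN : (0 : ℝ) < N := by exact_mod_cast (Fintype.card α).factorial_pos
  have hslice : ∀ j ∈ J, (#{A ∈ 𝒜 | #A = j} : ℝ) / (Fintype.card α).choose j =
      #{σ : Equiv.Perm α | σ • I j ∈ 𝒜} / N := by
    intro j hj
    have hchoose : (0 : ℝ) < (Fintype.card α).choose j := by
      exact_mod_cast Nat.choose_pos (hI j hj ▸ card_le_univ (I j))
    have hdouble := card_perm_smul_mem_mul_choose 𝒜 (I j)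
    rw [hI j hj] at hdouble
    rw [div_eq_div_iff hchoose.ne' hN.ne']
    exact_mod_cast hdouble.symm
  have hcount : ∑ j ∈ J, #{σ : Equiv.Perm α | σ • I j ∈ 𝒜} ≤ N := by
    calc ∑ j ∈ J, #{σ : Equiv.Perm α | σ • I j ∈ 𝒜}
        = ∑ σ : Equiv.Perm α, #{j ∈ J | σ • I j ∈ 𝒜} :=
          sum_card_bipartiteAbove_eq_sum_card_bipartiteBelow (fun j σ ↦ σ • I j ∈ 𝒜)
      _ ≤ ∑ _σ : Equiv.Perm α, 1 := sum_le_sum fun σ _ ↦ card_le_one.mpr fun j hj k hk ↦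
          hchain σ j (mem_filter.mp hj).1 k (mem_filter.mp hk).1 (mem_filter.mp hj).2
            (mem_filter.mp hk).2
      _ = N := by simp [N, Fintype.card_perm]
  rw [sum_congr rfl hslice, ← sum_div, div_le_one hN]
  exact_mod_cast hcount

end PermutationAveraging

theorem Fin.card_filter_val_mem_Ico {n a b : ℕ} (hb : b ≤ n) :
    #{i : Fin n | ↑i ∈ Ico a b} = b - a := by
  have hmap : ({i : Fin n | ↑i ∈ Ico a b} : Finset _).map Fin.valEmbedding = Ico a b := by
    ext m
    simp only [mem_map, mem_filter, mem_univ, true_and, Fin.valEmbedding_apply, mem_Ico]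
    exact ⟨fun ⟨i, hi, hm⟩ ↦ hm ▸ hi, fun hm ↦ ⟨⟨m, by omega⟩, hm, rfl⟩⟩
  rw [← card_map, hmap, Nat.card_Ico]

section SkewInterval

def skewInterval (n l j : ℕ) : Finset (Fin n) := {i : Fin n | ↑i ∈ Ico (j - l) (2 * j - l)}

variable {n l j k : ℕ}

theorem card_skewInterval (hlj : l ≤ j) (hn : 2 * j - l ≤ n) : #(skewInterval n l j) = j := by
  rw [skewInterval, Fin.card_filter_val_mem_Ico hn]; omega

theorem card_skewInterval_sdiff_of_le (hlj : l ≤ j) (hjk : j ≤ k) (hkj : k ≤ 2 * j)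
    (hn : 2 * k - l ≤ n) :
    #(skewInterval n l k \ skewInterval n l j) = 2 * (k - j) := by
  have hsdiff : skewInterval n l k \ skewInterval n l j =
      ({i : Fin n | ↑i ∈ Ico (2 * j - l) (2 * k - l)} : Finset _) := by
    ext i; simp only [skewInterval, mem_sdiff, mem_filter, mem_univ, true_and, mem_Ico]; omega
  rw [hsdiff, Fin.card_filter_val_mem_Ico hn]; omega

theorem card_sdiff_skewInterval_of_le (hlj : l ≤ j) (hjk : j ≤ k) (hkj : k ≤ 2 * j)
    (hn : 2 * k - l ≤ n) :
    #(skewInterval n l j \ skewInterval n l k) = k - j := by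
  have hsdiff : skewInterval n l j \ skewInterval n l k =
      ({i : Fin n | ↑i ∈ Ico (j - l) (k - l)} : Finset _) := by
    ext i; simp only [skewInterval, mem_sdiff, mem_filter, mem_univ, true_and, mem_Ico]; omega
  rw [hsdiff, Fin.card_filter_val_mem_Ico (by omega)]; omega

theorem card_smul_skewInterval_sdiff (σ : Equiv.Perm (Fin n)) (hlj : l ≤ j) (hjk : j ≤ k)
    (hkj : k ≤ 2 * j) (hn : 2 * k - l ≤ n) :
    #(σ • skewInterval n l k \ σ • skewInterval n l j) =
      2 * #(σ • skewInterval n l j \ σ • skewInterval n l k) := by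
  rw [← smul_finset_sdiff, ← smul_finset_sdiff, card_smul_finset, card_smul_finset,
    card_skewInterval_sdiff_of_le hlj hjk hkj hn, card_sdiff_skewInterval_of_le hlj hjk hkj hn]

theorem not_smul_skewInterval_mem_and_mem {𝒜 : Finset (Finset (Fin n))}
    (h : ∀ A ∈ 𝒜, ∀ B ∈ 𝒜, A ≠ B → #(A \ B) ≠ 2 * #(B \ A)) (σ : Equiv.Perm (Fin n))
    (hlj : l ≤ j) (hjk : j < k) (hkj : k ≤ 2 * j) (hn : 2 * k - l ≤ n) :
    ¬(σ • skewInterval n l j ∈ 𝒜 ∧ σ • skewInterval n l k ∈ 𝒜) := by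
  rintro ⟨hA, hB⟩
  refine h _ hB _ hA (fun hBA ↦ ?_) (card_smul_skewInterval_sdiff σ hlj hjk.le hkj hn)
  have hcard := congrArg card hBA
  rw [card_smul_finset, card_smul_finset, card_skewInterval (by omega) (by omega),
    card_skewInterval hlj (by omega)] at hcard
  omega

end SkewInterval

theorem stmt_0 (n : ℕ) (𝒜 : Finset (Finset (Fin n)))
    (h : ∀ A ∈ 𝒜, ∀ B ∈ 𝒜, A ≠ B → (A \ B).card ≠ 2 * (B \ A).card)
    (l : ℕ) (hl : 3 * l ≤ n) :
    ∑ j ∈ Finset.Icc l (2 * l),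
      ((𝒜.filter (fun s => s.card = j)).card : ℝ) / (n.choose j : ℝ) ≤ 1 := by
  have hcard : ∀ j ∈ Icc l (2 * l), #(skewInterval n l j) = j := fun j hj ↦
    card_skewInterval (mem_Icc.mp hj).1 (by grind)
  simpa using sum_card_slice_div_choose_le_one 𝒜 (Icc l (2 * l)) (skewInterval n l) hcard
    fun σ j hj k hk hA hB ↦ by
      rw [mem_Icc] at hj hk
      by_contra hne
      rcases Nat.lt_or_gt_of_ne hne with hjk | hkj
      exacts [not_smul_skewInterval_mem_and_mem h σ hj.1 hjk (by omega) (by omega) ⟨hA, hB⟩,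
        not_smul_skewInterval_mem_and_mem h σ hk.1 hkj (by omega) (by omega) ⟨hB, hA⟩]
end

section
/- Suppose A is a family of subsets of {1,...,n} such that |A \ B| ≠ 2|B \ A| for all distinct A, B in the family. Then |A| ≤ (1 + o(1)) · C(n, ⌊n/2⌋) as n → ∞. Concretely: for every ε > 0 there exists N such that for all n ≥ N, any such family satisfies |A| ≤ (1+ε) · C(n, ⌊n/2⌋). -/
/-!
For `n ≤ 3c ≤ 3n/2` the sets `I_t = [t, c + 2t)`, `0 ≤ t ≤ n - 2c`, have sizes `c, …, n - c`,
and for `i < j` we have `|I_j \ I_i| = 2(j - i) = 2|I_i \ I_j|`. Hence, for every permutation `π`,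
the family contains at most one of the sets `π(I_t)`. Averaging over all permutations (Katona's
method) gives `∑_{c ≤ k ≤ n - c} |𝒜_k| / C(n, k) ≤ 1`, so at most `C(n, ⌊n/2⌋)` members of the
family have size in `[c, n - c]`. Taking `c ≈ n/3`, the remaining members number at most
`2 ∑_{s < c} C(n, s)`, which is exponentially smaller than `C(n, ⌊n/2⌋)` because
`C(n, j) ≤ (3/4) C(n, j + 1)` for `j` up to about `3n/7`.
-/

open Finset Fintype Equiv Nat

theorem card_filter_image_mem_le_one {α ι : Type*} [DecidableEq α] [LinearOrder ι]
    {𝒜 : Finset (Finset α)} (h𝒜 : ∀ A ∈ 𝒜, ∀ B ∈ 𝒜, A ≠ B → #(A \ B) ≠ 2 * #(B \ A))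
    {T : Finset ι} {I : ι → Finset α}
    (hI : ∀ i ∈ T, ∀ j ∈ T, i < j → 0 < #(I i \ I j) ∧ #(I j \ I i) = 2 * #(I i \ I j))
    (π : Perm α) : #{t ∈ T | (I t).image π ∈ 𝒜} ≤ 1 := by
  have card_image_sdiff (i j : ι) : #((I i).image π \ (I j).image π) = #(I i \ I j) := by
    rw [← image_sdiff _ _ π.injective, card_image_of_injective _ π.injective]
  have not_both {i j : ι} (hi : i ∈ T) (hj : j ∈ T) (hij : i < j) :
      ¬ ((I i).image π ∈ 𝒜 ∧ (I j).image π ∈ 𝒜) := fun ⟨hiA, hjA⟩ => by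
    obtain ⟨hpos, htwice⟩ := hI i hi j hj hij
    refine h𝒜 _ hjA _ hiA (fun heq => ?_) (by rw [card_image_sdiff, card_image_sdiff, htwice])
    rw [← card_image_sdiff, heq, Finset.sdiff_self, Finset.card_empty] at hpos
    exact hpos.false
  rw [card_le_one]
  simp only [mem_filter]
  intro i ⟨hi, hiA⟩ j ⟨hj, hjA⟩
  by_contra hne
  rcases lt_or_gt_of_ne hne with hij | hji
  · exact not_both hi hj hij ⟨hiA, hjA⟩
  · exact not_both hj hi hji ⟨hjA, hiA⟩

section FiniteGroundSet

variable {α : Type*} [Fintype α] [DecidableEq α]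

theorem le_card_perm_image_eq {I S : Finset α} (h : #I = #S) :
    (#I)! * (card α - #I)! ≤ #{π : Perm α | I.image π = S} := by
  obtain ⟨e⟩ : Nonempty ({x // x ∈ I} ≃ {x // x ∈ S}) := by
    rw [← Fintype.card_eq]; simpa using h
  have image_eq : ∀ π : Perm α, (∀ x ∈ I, π x ∈ S) → I.image π = S := fun π hπ =>
    eq_of_subset_of_card_le (image_subset_iff.2 hπ)
      (by rw [card_image_of_injective _ π.injective, h])
  -- `e.extendSubtype` carries `I` onto `S`, and so does its composite with any permutation
  -- preserving `I`; these composites are pairwise distinct.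
  let f (p : Perm {x // x ∈ I} × Perm {x // x ∉ I}) : {π : Perm α // I.image π = S} :=
    ⟨e.extendSubtype * Perm.subtypeCongrHom _ p, image_eq _ fun x hx => by
      simpa [Perm.subtypeCongr.left_apply _ _ hx] using e.extendSubtype_mem _ (p.1 ⟨x, hx⟩).2⟩
  have hf : Function.Injective f := fun p q hpq =>
    Perm.subtypeCongrHom_injective _ (mul_left_cancel (congrArg Subtype.val hpq))
  simpa [Fintype.card_perm, Fintype.card_subtype_compl, ← Fintype.card_subtype]
    using Fintype.card_le_of_injective f hf

theorem card_slice_mul_le_card_perm_image_mem (𝒜 : Finset (Finset α)) (I : Finset α) :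
    #(𝒜 # #I) * ((#I)! * (card α - #I)!) ≤ #{π : Perm α | I.image π ∈ 𝒜} :=
  calc #(𝒜 # #I) * ((#I)! * (card α - #I)!)
      = ∑ S ∈ 𝒜 # #I, (#I)! * (card α - #I)! := by rw [sum_const, smul_eq_mul]
    _ ≤ ∑ S ∈ 𝒜 # #I, #{π : Perm α | I.image π = S} :=
      sum_le_sum fun S hS => le_card_perm_image_eq (mem_slice.1 hS).2.symm
    _ = #{π : Perm α | I.image π ∈ 𝒜 # #I} := sum_card_fiberwise_eq_card_filter _ _ _
    _ ≤ #{π : Perm α | I.image π ∈ 𝒜} :=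
      card_le_card (monotone_filter_right _ fun _ _ h => slice_subset h)

theorem sum_card_slice_mul_le_factorial {ι : Type*} (𝒜 : Finset (Finset α)) (T : Finset ι)
    (I : ι → Finset α) (h : ∀ π : Perm α, #{t ∈ T | (I t).image π ∈ 𝒜} ≤ 1) :
    ∑ t ∈ T, #(𝒜 # #(I t)) * ((#(I t))! * (card α - #(I t))!) ≤ (card α)! :=
  calc ∑ t ∈ T, #(𝒜 # #(I t)) * ((#(I t))! * (card α - #(I t))!)
      ≤ ∑ t ∈ T, #{π : Perm α | (I t).image π ∈ 𝒜} :=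
      sum_le_sum fun t _ => card_slice_mul_le_card_perm_image_mem 𝒜 (I t)
    _ = ∑ π : Perm α, #{t ∈ T | (I t).image π ∈ 𝒜} := by simp_rw [card_filter]; exact sum_comm
    _ ≤ ∑ _π : Perm α, 1 := sum_le_sum fun π _ => h π
    _ = (card α)! := by simp [Fintype.card_perm]

theorem sum_card_slice_le_choose_half {ι : Type*} (𝒜 : Finset (Finset α)) (T : Finset ι)
    (I : ι → Finset α) (h : ∀ π : Perm α, #{t ∈ T | (I t).image π ∈ 𝒜} ≤ 1) :
    ∑ t ∈ T, #(𝒜 # #(I t)) ≤ (card α).choose (card α / 2) := by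
  refine Nat.le_of_mul_le_mul_right ?_ (factorial_pos (card α))
  calc (∑ t ∈ T, #(𝒜 # #(I t))) * (card α)!
        = ∑ t ∈ T, #(𝒜 # #(I t)) *
          ((card α).choose (#(I t)) * ((#(I t))! * (card α - #(I t))!)) := by
        rw [sum_mul]
        refine sum_congr rfl fun t _ => ?_
        rw [← mul_assoc _ (#(I t))!, choose_mul_factorial_mul_factorial (card_le_univ _)]
    _ ≤ ∑ t ∈ T, (card α).choose (card α / 2) *
          (#(𝒜 # #(I t)) * ((#(I t))! * (card α - #(I t))!)) :=
      sum_le_sum fun t _ => by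
        rw [mul_left_comm]; gcongr; exact choose_le_middle _ _
    _ ≤ (card α).choose (card α / 2) * (card α)! := by
      rw [← mul_sum]; gcongr; exact sum_card_slice_mul_le_factorial 𝒜 T I h

theorem card_filter_card_lt_le (𝒜 : Finset (Finset α)) (c : ℕ) :
    #{S ∈ 𝒜 | #S < c} ≤ ∑ s ∈ range c, (card α).choose s :=
  calc #{S ∈ 𝒜 | #S < c} ≤ #((range c).biUnion fun s => powersetCard s univ) :=
        card_le_card fun S hS => by simp_all
    _ ≤ ∑ s ∈ range c, (card α).choose s := card_biUnion_le.trans_eq (by simp)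

theorem card_filter_lt_card_le (𝒜 : Finset (Finset α)) (c : ℕ) :
    #{S ∈ 𝒜 | card α - c < #S} ≤ ∑ s ∈ range c, (card α).choose s :=
  calc #{S ∈ 𝒜 | card α - c < #S} ≤ #{S : Finset α | #S < c} :=
        card_le_card_of_injOn compl (fun S hS => by
          simp only [coe_filter, Set.mem_ofPred_eq, mem_univ, true_and, card_compl] at hS ⊢
          have := card_le_univ S
          omega) compl_injective.injOn
    _ ≤ ∑ s ∈ range c, (card α).choose s := card_filter_card_lt_le _ c

theorem card_le_card_filter_add_two_mul_sum_choose (𝒜 : Finset (Finset α)) (c : ℕ) :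
    #𝒜 ≤ #{S ∈ 𝒜 | c ≤ #S ∧ #S ≤ card α - c} + 2 * ∑ s ∈ range c, (card α).choose s := by
  have hcover : 𝒜 ⊆ {S ∈ 𝒜 | c ≤ #S ∧ #S ≤ card α - c} ∪ {S ∈ 𝒜 | #S < c} ∪
      {S ∈ 𝒜 | card α - c < #S} := fun S hS => by
    simp only [mem_union, mem_filter, hS, true_and]
    omega
  have := card_le_card hcover
  have := card_union_le ({S ∈ 𝒜 | c ≤ #S ∧ #S ≤ card α - c} ∪ {S ∈ 𝒜 | #S < c})
    {S ∈ 𝒜 | card α - c < #S}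
  have := card_union_le {S ∈ 𝒜 | c ≤ #S ∧ #S ≤ card α - c} {S ∈ 𝒜 | #S < c}
  have := card_filter_card_lt_le 𝒜 c
  have := card_filter_lt_card_le 𝒜 c
  omega

end FiniteGroundSet

theorem card_filter_val_mem {n : ℕ} {s : Finset ℕ} (hs : ∀ m ∈ s, m < n) :
    #{x : Fin n | (x : ℕ) ∈ s} = #s := by
  rw [← card_attachFin s hs]
  congr 1
  ext x
  simp

def intervalFamily (n c t : ℕ) : Finset (Fin n) := {x | (x : ℕ) ∈ Ico t (c + 2 * t)}

theorem card_intervalFamily {n c t : ℕ} (h : c + 2 * t ≤ n) : #(intervalFamily n c t) = c + t := by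
  rw [intervalFamily, card_filter_val_mem fun m hm => by simp at hm; omega, Nat.card_Ico]
  omega

theorem intervalFamily_sdiff {n c i j : ℕ} (hij : i < j) (hjc : j ≤ c) (hn : c + 2 * j ≤ n) :
    0 < #(intervalFamily n c i \ intervalFamily n c j) ∧
      #(intervalFamily n c j \ intervalFamily n c i) =
        2 * #(intervalFamily n c i \ intervalFamily n c j) := by
  have hleft : intervalFamily n c i \ intervalFamily n c j =
      ({x | (x : ℕ) ∈ Ico i j} : Finset (Fin n)) := by
    ext; simp [intervalFamily]; omega
  have hright : intervalFamily n c j \ intervalFamily n c i =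
      ({x | (x : ℕ) ∈ Ico (c + 2 * i) (c + 2 * j)} : Finset (Fin n)) := by
    ext; simp [intervalFamily]; omega
  rw [hleft, hright, card_filter_val_mem fun m hm => by simp at hm; omega,
    card_filter_val_mem fun m hm => by simp at hm; omega, Nat.card_Ico, Nat.card_Ico]
  omega

theorem choose_le_mul_choose_succ {n j : ℕ} {q : ℝ} (hj : j < n)
    (hq : (j + 1 : ℝ) ≤ q * (n - j)) :
    (n.choose j : ℝ) ≤ q * n.choose (j + 1) := by
  have hrec : (n.choose (j + 1) : ℝ) * (j + 1) = n.choose j * (n - j) := by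
    rw [← Nat.cast_succ, ← Nat.cast_sub hj.le]
    exact_mod_cast Nat.choose_succ_right_eq n j
  have hnj : (0 : ℝ) < n - j := by rw [sub_pos]; exact_mod_cast hj
  refine le_of_mul_le_mul_right ?_ hnj
  calc (n.choose j : ℝ) * (n - j) = n.choose (j + 1) * (j + 1) := hrec.symm
    _ ≤ n.choose (j + 1) * (q * (n - j)) := by gcongr
    _ = q * n.choose (j + 1) * (n - j) := by ring

theorem le_pow_mul_of_le_mul_succ {f : ℕ → ℝ} {q : ℝ} (hq : 0 ≤ q) {a b : ℕ} (hab : a ≤ b)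
    (hf : ∀ j, a ≤ j → j < b → f j ≤ q * f (j + 1)) : f a ≤ q ^ (b - a) * f b := by
  induction b, hab using Nat.le_induction with
  | base => simp
  | succ b hab ih =>
    calc f a ≤ q ^ (b - a) * f b := ih fun j hj hjb => hf j hj (by omega)
      _ ≤ q ^ (b - a) * (q * f (b + 1)) := by gcongr; exact hf b hab (by omega)
      _ = q ^ (b + 1 - a) * f (b + 1) := by rw [Nat.sub_add_comm hab, pow_succ]; ring

theorem one_sub_mul_sum_range_le {f : ℕ → ℝ} {q : ℝ} (h0 : 0 ≤ q * f 0) (a : ℕ)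
    (hf : ∀ j < a, f j ≤ q * f (j + 1)) : (1 - q) * ∑ s ∈ range a, f s ≤ q * f a := by
  induction a with
  | zero => simpa using h0
  | succ a ih =>
    have := ih fun j hj => hf j (by omega)
    have := hf a (by omega)
    rw [sum_range_succ]
    linarith

theorem sum_range_choose_le {n c b : ℕ} (hcb : c ≤ b) (hb : 7 * b ≤ 3 * n + 3) :
    ∑ s ∈ range c, (n.choose s : ℝ) ≤ 3 * (3 / 4) ^ (b - c) * n.choose (n / 2) := by
  have hratio : ∀ j < b, (n.choose j : ℝ) ≤ 3 / 4 * n.choose (j + 1) := fun j hj =>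
    choose_le_mul_choose_succ (by omega) (by
      have : (7 * j + 4 : ℝ) ≤ 3 * n := by exact_mod_cast (by omega : 7 * j + 4 ≤ 3 * n)
      linarith)
  have hsum := one_sub_mul_sum_range_le (f := fun s => (n.choose s : ℝ)) (by positivity) c
    fun j hj => hratio j (by omega)
  have hdecay := le_pow_mul_of_le_mul_succ (f := fun s => (n.choose s : ℝ)) (by norm_num) hcb
    fun j _ hj => hratio j hj
  have hmiddle : (n.choose b : ℝ) ≤ n.choose (n / 2) := by exact_mod_cast choose_le_middle b n
  have hpow : (0 : ℝ) ≤ (3 / 4) ^ (b - c) := by positivity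
  nlinarith

theorem card_filter_card_mem_middle_le {n c : ℕ} (hc : n ≤ 3 * c) (hcn : 2 * c ≤ n)
    {𝒜 : Finset (Finset (Fin n))}
    (h𝒜 : ∀ A ∈ 𝒜, ∀ B ∈ 𝒜, A ≠ B → #(A \ B) ≠ 2 * #(B \ A)) :
    #{S ∈ 𝒜 | c ≤ #S ∧ #S ≤ n - c} ≤ n.choose (n / 2) := by
  have hcard : ∀ t ∈ range (n - 2 * c + 1), #(intervalFamily n c t) = c + t := fun t ht =>
    card_intervalFamily (by simp at ht; omega)
  have hmeet : ∀ π : Perm (Fin n),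
      #{t ∈ range (n - 2 * c + 1) | (intervalFamily n c t).image π ∈ 𝒜} ≤ 1 :=
    card_filter_image_mem_le_one h𝒜 fun i _ j hj hij =>
      intervalFamily_sdiff hij (by simp at hj; omega) (by simp at hj; omega)
  calc #{S ∈ 𝒜 | c ≤ #S ∧ #S ≤ n - c}
      ≤ #((range (n - 2 * c + 1)).biUnion fun t => 𝒜 # #(intervalFamily n c t)) :=
        card_le_card fun S hS => by
          simp only [mem_filter] at hS
          rw [mem_biUnion]
          refine ⟨#S - c, by simp; omega, mem_slice.2 ⟨hS.1, ?_⟩⟩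
          rw [hcard _ (by simp; omega)]
          omega
    _ ≤ ∑ t ∈ range (n - 2 * c + 1), #(𝒜 # #(intervalFamily n c t)) := card_biUnion_le
    _ ≤ n.choose (n / 2) := by
        simpa using sum_card_slice_le_choose_half 𝒜 _ _ hmeet

theorem stmt_2 (ε : ℝ) (hε : 0 < ε) :
    ∃ N : ℕ, ∀ n ≥ N, ∀ 𝒜 : Finset (Finset (Fin n)),
      (∀ A ∈ 𝒜, ∀ B ∈ 𝒜, A ≠ B → (A \ B).card ≠ 2 * (B \ A).card) →
      (𝒜.card : ℝ) ≤ (1 + ε) * (n.choose (n / 2) : ℝ) := by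
  obtain ⟨K, hK⟩ : ∃ K : ℕ, (3 / 4 : ℝ) ^ K < ε / 6 :=
    exists_pow_lt_of_lt_one (by positivity) (by norm_num)
  refine ⟨11 * K + 12, fun n hn 𝒜 h𝒜 => ?_⟩
  set c := (n + 2) / 3
  set b := (3 * n + 3) / 7
  have hsplit : (#𝒜 : ℝ) ≤
      #{S ∈ 𝒜 | c ≤ #S ∧ #S ≤ n - c} + 2 * ∑ s ∈ range c, (n.choose s : ℝ) := by
    exact_mod_cast Fintype.card_fin n ▸ card_le_card_filter_add_two_mul_sum_choose 𝒜 c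
  have hmiddle : (#{S ∈ 𝒜 | c ≤ #S ∧ #S ≤ n - c} : ℝ) ≤ n.choose (n / 2) := by
    exact_mod_cast card_filter_card_mem_middle_le (by omega) (by omega) h𝒜
  have htail := sum_range_choose_le (n := n) (c := c) (b := b) (by omega) (by omega)
  have hdecay : (3 / 4 : ℝ) ^ (b - c) ≤ (3 / 4) ^ K :=
    pow_le_pow_of_le_one (by norm_num) (by norm_num) (by omega)
  have hC : (0 : ℝ) ≤ n.choose (n / 2) := by positivity
  nlinarith
end

section
/- Let A be a family of subsets of {1,...,n} such that for all distinct A, B in the family, |A \ B| ≠ 2|B \ A|. Then the total number of members of A with size strictly between 2n/5 and 3n/5 is at most C(n, ⌊n/2⌋). -/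
/-!
Katona's permutation method. Put `c = ⌊2n/5⌋ + 1` and, for each size `k` in the band
`2n/5 < k < 3n/5`, let `W k = [k - c, 2k - c)`, a `k`-subset of `[0, n)`. As `k` grows the left
end of the window moves by one and the right end by two, so for `k ≤ k'` in the band
`|W k' \ W k| = 2 |W k \ W k'|`. Hence a permutation `g` satisfies `g • W |A| = A` for at most one
member `A` of the band. Every `k`-set is hit by exactly `n! / C(n, k) ≥ n! / C(n, ⌊n/2⌋)`
permutations, and counting permutations gives the bound.
-/
open Finset MulAction Equiv
open scoped Pointwise Nat

theorem MulAction.card_filter_smul_eq_mul_card {G X : Type*} [Group G] [Fintype G]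
    [MulAction G X] [IsPretransitive G X] [DecidableEq X] (x y : X) :
    #{g : G | g • x = y} * Nat.card X = Fintype.card G := by
  obtain ⟨g₀, rfl⟩ := exists_smul_eq G x y
  have h_coset : #{g : G | g • x = g₀ • x} = Nat.card (stabilizer G x) := by
    rw [Nat.card_eq_fintype_card, Fintype.card_subtype]
    refine card_nbij' (g₀⁻¹ * ·) (g₀ * ·) ?_ ?_ ?_ ?_ <;> intro g hg <;>
      simp_all [mul_smul]
  rw [h_coset, ← index_stabilizer_of_transitive G x, Subgroup.card_mul_index,
    Nat.card_eq_fintype_card]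

theorem Finset.card_filter_perm_smul_eq_mul_choose {α : Type*} [Fintype α] [DecidableEq α]
    {s t : Finset α} (h : #s = #t) :
    #{g : Perm α | g • s = t} * (Fintype.card α).choose #s = (Fintype.card α)! := by
  have := Set.powersetCard.isPretransitive (α := α) (n := #s)
  have key := card_filter_smul_eq_mul_card (G := Perm α)
    (⟨s, rfl⟩ : Set.powersetCard α #s) ⟨t, h.symm⟩
  rw [Set.powersetCard.card, Nat.card_eq_fintype_card, Fintype.card_perm] at key
  simpa only [← Subtype.val_inj, Set.powersetCard.coe_smul] using key

theorem Finset.card_le_choose_half_of_perm_separated {α : Type*} [Fintype α] [DecidableEq α]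
    (𝒜 : Finset (Finset α)) (D : Finset α → Finset α) (hD : ∀ A ∈ 𝒜, #(D A) = #A)
    (hsep : ∀ g : Perm α, ∀ A ∈ 𝒜, ∀ B ∈ 𝒜, g • D A = A → g • D B = B → A = B) :
    #𝒜 ≤ (Fintype.card α).choose (Fintype.card α / 2) := by
  set N := Fintype.card α
  let fiber (A : Finset α) : Finset (Perm α) := {g | g • D A = A}
  have h_disj : (𝒜 : Set (Finset α)).PairwiseDisjoint fiber := by
    intro A hA B hB hAB
    refine disjoint_left.2 fun g hgA hgB => hAB ?_
    exact hsep g A hA B hB (mem_filter.1 hgA).2 (mem_filter.1 hgB).2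
  have h_sum : ∑ A ∈ 𝒜, #(fiber A) ≤ N ! := by
    rw [← card_biUnion h_disj, ← Fintype.card_perm, ← card_univ]
    exact card_le_univ _
  have h_fiber : ∀ A ∈ 𝒜, N ! ≤ #(fiber A) * N.choose (N / 2) := by
    intro A hA
    rw [← card_filter_perm_smul_eq_mul_choose (hD A hA), hD A hA]
    exact Nat.mul_le_mul_left _ (Nat.choose_le_middle _ _)
  have : #𝒜 * N ! ≤ N.choose (N / 2) * N ! :=
    calc #𝒜 * N ! = ∑ A ∈ 𝒜, N ! := by rw [sum_const, smul_eq_mul]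
      _ ≤ ∑ A ∈ 𝒜, #(fiber A) * N.choose (N / 2) := sum_le_sum h_fiber
      _ = (∑ A ∈ 𝒜, #(fiber A)) * N.choose (N / 2) := (sum_mul ..).symm
      _ ≤ N ! * N.choose (N / 2) := Nat.mul_le_mul_right _ h_sum
      _ = N.choose (N / 2) * N ! := mul_comm ..
  exact Nat.le_of_mul_le_mul_right this (Nat.factorial_pos N)

theorem Fin.card_preimage_val_Ico {n a b : ℕ} (hb : b ≤ n) :
    #((Ico a b).preimage (Fin.val : Fin n → ℕ) Fin.val_injective.injOn) = b - a := by
  rw [card_preimage, filter_true_of_mem fun m hm => ⟨⟨m, by grind⟩, rfl⟩,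
    Nat.card_Ico]

noncomputable def window (n c k : ℕ) : Finset (Fin n) :=
  (Ico (k - c) (2 * k - c)).preimage Fin.val Fin.val_injective.injOn

theorem card_window {n c k : ℕ} (hc : c ≤ k) (hn : 2 * k - c ≤ n) : #(window n c k) = k := by
  rw [window, Fin.card_preimage_val_Ico hn]
  omega

theorem card_window_sdiff_window {n c k k' : ℕ} (hc : c ≤ k) (hk : k ≤ k') (hk' : k' ≤ 2 * k)
    (hn : 2 * k' - c ≤ n) :
    #(window n c k' \ window n c k) = 2 * #(window n c k \ window n c k') := by
  have h_right : window n c k' \ window n c k =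
      (Ico (2 * k - c) (2 * k' - c)).preimage Fin.val Fin.val_injective.injOn := by
    ext i; simp only [window, mem_sdiff, mem_preimage, mem_Ico]; omega
  have h_left : window n c k \ window n c k' =
      (Ico (k - c) (k' - c)).preimage Fin.val Fin.val_injective.injOn := by
    ext i; simp only [window, mem_sdiff, mem_preimage, mem_Ico]; omega
  rw [h_right, h_left, Fin.card_preimage_val_Ico hn, Fin.card_preimage_val_Ico (by omega)]
  omega

theorem eq_of_perm_smul_window_eq {n : ℕ} {𝒜 : Finset (Finset (Fin n))}
    (h : ∀ A ∈ 𝒜, ∀ B ∈ 𝒜, A ≠ B → #(A \ B) ≠ 2 * #(B \ A)) {g : Perm (Fin n)}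
    {A B : Finset (Fin n)} (hA𝒜 : A ∈ 𝒜) (hB𝒜 : B ∈ 𝒜) (hA : 2 * n < 5 * #A) (hB : 5 * #B < 3 * n)
    (hAB : #A ≤ #B) (hgA : g • window n (2 * n / 5 + 1) #A = A)
    (hgB : g • window n (2 * n / 5 + 1) #B = B) : A = B := by
  set c := 2 * n / 5 + 1
  by_contra hne
  refine h B hB𝒜 A hA𝒜 (Ne.symm hne) ?_
  calc #(B \ A) = #(g • window n c #B \ g • window n c #A) := by rw [hgA, hgB]
    _ = #(window n c #B \ window n c #A) := by rw [← smul_finset_sdiff, card_smul_finset]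
    _ = 2 * #(window n c #A \ window n c #B) :=
        card_window_sdiff_window (by omega) hAB (by omega) (by omega)
    _ = 2 * #(g • window n c #A \ g • window n c #B) := by
        rw [← smul_finset_sdiff, card_smul_finset]
    _ = 2 * #(A \ B) := by rw [hgA, hgB]

theorem stmt_3 (n : ℕ) (𝒜 : Finset (Finset (Fin n)))
    (h : ∀ A ∈ 𝒜, ∀ B ∈ 𝒜, A ≠ B → (A \ B).card ≠ 2 * (B \ A).card) :
    (𝒜.filter (fun s => 2 * n < 5 * s.card ∧ 5 * s.card < 3 * n)).card ≤
      n.choose (n / 2) := by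
  set ℬ := 𝒜.filter (fun s => 2 * n < 5 * s.card ∧ 5 * s.card < 3 * n)
  have h_band : ∀ A ∈ ℬ, A ∈ 𝒜 ∧ 2 * n < 5 * #A ∧ 5 * #A < 3 * n := fun A hA => mem_filter.1 hA
  refine (card_le_choose_half_of_perm_separated ℬ (fun A => window n (2 * n / 5 + 1) #A)
    ?_ ?_).trans_eq (by rw [Fintype.card_fin])
  · intro A hA
    obtain ⟨-, hA₁, hA₂⟩ := h_band A hA
    exact card_window (by omega) (by omega)
  · intro g A hA B hB hgA hgB
    obtain ⟨hA𝒜, hA₁, hA₂⟩ := h_band A hA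
    obtain ⟨hB𝒜, hB₁, hB₂⟩ := h_band B hB
    rcases le_total #A #B with hAB | hBA
    · exact eq_of_perm_smul_window_eq h hA𝒜 hB𝒜 hA₁ hB₂ hAB hgA hgB
    · exact (eq_of_perm_smul_window_eq h hB𝒜 hA𝒜 hB₁ hA₂ hBA hgB hgA).symm
end

section
/- Let n be even and define I ⊆ {0,...,n} by I = {a_i : i ≥ 0} ∪ {b_i : i ≥ 0} where a_0 = b_0 = n/2, a_i = ⌈a_{i−1}/2⌉ − 1, and b_i = ⌊(b_{i−1}+n)/2⌋ + 1. Then the family B_0 = ∪_{i∈I} [n]^(i) of all subsets of [n] whose size lies in I satisfies |A \ B| ≠ 2|B \ A| for all distinct A, B in B_0. -/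
/-!
If `|A \ B| = 2 |B \ A| = 2d` with `A ≠ B`, then `d > 0`, and with `c = |A ∩ B|` the sizes
`α = |A| = c + 2d` and `β = |B| = c + d` satisfy `β < α ≤ 2β` and `2α ≤ n + β`.
Distinct terms of `a` differ by more than a factor `2`, and a larger term of `b` lies more than
halfway from a smaller one to `n`; this rules out pairs of sizes from the same sequence.
A mixed pair reduces to these, since every `a_i` is at most `a_0 = b_0`, which is at most every `b_i`.
-/

open Finset

theorem Finset.card_bounds_of_card_sdiff_eq_two_mul {α : Type*} [Fintype α] [DecidableEq α]
    {A B : Finset α} (hAB : A ≠ B) (h : #(A \ B) = 2 * #(B \ A)) :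
    #B < #A ∧ #A ≤ 2 * #B ∧ 2 * #A ≤ Fintype.card α + #B := by
  have hpos : #(B \ A) ≠ 0 := by
    intro h0
    rw [h0, card_eq_zero, sdiff_eq_empty_iff_subset] at h
    rw [card_eq_zero, sdiff_eq_empty_iff_subset] at h0
    exact hAB (h.antisymm h0)
  have hA := card_inter_add_card_sdiff A B
  have hB := card_inter_add_card_sdiff B A
  have hU := card_union_add_card_inter A B
  have hUn := card_le_univ (A ∪ B)
  rw [inter_comm] at hB
  omega

section HalvingDown

variable {a : ℕ → ℕ}

theorem antitone_of_succ_eq_half_sub_one (ha : ∀ i, a (i + 1) = (a i + 1) / 2 - 1) : Antitone a :=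
  antitone_nat_of_succ_le fun i => by rw [ha]; omega

theorem two_mul_lt_of_lt_of_succ_eq_half_sub_one (ha : ∀ i, a (i + 1) = (a i + 1) / 2 - 1)
    {i k : ℕ} (h : a k < a i) : 2 * a k < a i := by
  have hik : i + 1 ≤ k := by
    by_contra! hki
    exact (antitone_of_succ_eq_half_sub_one ha (Nat.le_of_lt_succ hki)).not_gt h
  have := antitone_of_succ_eq_half_sub_one ha hik
  rw [ha] at this
  omega

end HalvingDown

section HalvingUp

variable {n : ℕ} {b : ℕ → ℕ}

theorem le_add_one_of_succ_eq_half_add_one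
    (hb : ∀ i, b (i + 1) = (b i + n) / 2 + 1) (hb0 : b 0 ≤ n + 1) (i : ℕ) : b i ≤ n + 1 := by
  induction i with
  | zero => exact hb0
  | succ i ih => rw [hb]; omega

theorem monotone_of_succ_eq_half_add_one
    (hb : ∀ i, b (i + 1) = (b i + n) / 2 + 1) (hb0 : b 0 ≤ n + 1) : Monotone b :=
  monotone_nat_of_le_succ fun i => by
    have := le_add_one_of_succ_eq_half_add_one hb hb0 i
    rw [hb]; omega

theorem add_lt_two_mul_of_lt_of_succ_eq_half_add_one
    (hb : ∀ i, b (i + 1) = (b i + n) / 2 + 1) (hb0 : b 0 ≤ n + 1) {i k : ℕ} (h : b k < b i) :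
    b k + n < 2 * b i := by
  have hki : k + 1 ≤ i := by
    by_contra! hik
    exact (monotone_of_succ_eq_half_add_one hb hb0 (Nat.le_of_lt_succ hik)).not_gt h
  have := monotone_of_succ_eq_half_add_one hb hb0 hki
  rw [hb] at this
  omega

end HalvingUp

theorem stmt_4_general (n : ℕ) (a b : ℕ → ℕ)
    (ha0 : a 0 = n / 2) (ha : ∀ i, a (i + 1) = (a i + 1) / 2 - 1)
    (hb0 : b 0 = n / 2) (hb : ∀ i, b (i + 1) = (b i + n) / 2 + 1)
    (A B : Finset (Fin n))
    (hA : ∃ i, A.card = a i ∨ A.card = b i)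
    (hB : ∃ i, B.card = a i ∨ B.card = b i)
    (hAB : A ≠ B) :
    (A \ B).card ≠ 2 * (B \ A).card := by
  intro h
  obtain ⟨hlt, hle_two_mul, hle_add⟩ := card_bounds_of_card_sdiff_eq_two_mul hAB h
  rw [Fintype.card_fin] at hle_add
  have hb0_le : b 0 ≤ n + 1 := by omega
  have ha_le (i : ℕ) : a i ≤ a 0 := antitone_of_succ_eq_half_sub_one ha (Nat.zero_le i)
  have hb_ge (i : ℕ) : b 0 ≤ b i := monotone_of_succ_eq_half_add_one hb hb0_le (Nat.zero_le i)
  obtain ⟨i, hi | hi⟩ := hA <;> obtain ⟨k, hk | hk⟩ := hB <;> rw [hi, hk] at hlt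
  · have := two_mul_lt_of_lt_of_succ_eq_half_sub_one ha hlt
    omega
  · have := ha_le i
    have := hb_ge k
    omega
  · rcases (ha_le k).lt_or_eq with hk0 | hk0
    · have := two_mul_lt_of_lt_of_succ_eq_half_sub_one ha hk0
      have := hb_ge i
      omega
    · have := add_lt_two_mul_of_lt_of_succ_eq_half_add_one hb hb0_le (i := i) (k := 0)
        (by omega)
      omega
  · have := add_lt_two_mul_of_lt_of_succ_eq_half_add_one hb hb0_le hlt
    omega

theorem stmt_4 (n : ℕ) (hn : Even n) (a b : ℕ → ℕ)
    (ha0 : a 0 = n / 2) (ha : ∀ i, a (i + 1) = (a i + 1) / 2 - 1)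
    (hb0 : b 0 = n / 2) (hb : ∀ i, b (i + 1) = (b i + n) / 2 + 1)
    (A B : Finset (Fin n))
    (hA : ∃ i, A.card = a i ∨ A.card = b i)
    (hB : ∃ i, B.card = a i ∨ B.card = b i)
    (hAB : A ≠ B) :
    (A \ B).card ≠ 2 * (B \ A).card :=
  stmt_4_general n a b ha0 ha hb0 hb A B hA hB hAB
end

section
/- Let p < q be coprime positive integers and let I ⊆ {0,...,n} be a set of q − p consecutive integers. Then the family A = ∪_{i∈I} [n]^(i) satisfies p|A \ B| ≠ q|B \ A| for all distinct A, B in the family. -/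
/-!
If `p * |A \ B| = q * |B \ A|` with `p, q` coprime, then `|A \ B| = q k` and `|B \ A| = p k`,
where `k ≥ 1` unless `A = B`. Hence `|A| - |B| = (q - p) k ≥ q - p`, so `A` and `B` cannot both
have their sizes in an interval of `q - p` consecutive integers.
-/

open Finset

theorem Nat.Coprime.exists_eq_mul_of_mul_eq {p q a b : ℕ} (hco : p.Coprime q)
    (h : p * a = q * b) : ∃ k, a = q * k ∧ b = p * k := by
  obtain ⟨k, rfl⟩ : q ∣ a := hco.symm.dvd_of_dvd_mul_left ⟨b, h⟩
  rcases q.eq_zero_or_pos with rfl | hq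
  · obtain rfl : p = 1 := by simpa using hco
    exact ⟨b, by simp, by simp⟩
  · refine ⟨k, rfl, ?_⟩
    exact Nat.eq_of_mul_eq_mul_left hq (by rw [← h]; ring)

theorem Finset.card_add_sub_le_card_of_mul_card_sdiff_eq {α : Type*} [DecidableEq α]
    {A B : Finset α} {p q : ℕ} (hco : p.Coprime q) (hpq : p ≤ q) (hAB : A ≠ B)
    (h : p * #(A \ B) = q * #(B \ A)) : #B + (q - p) ≤ #A := by
  obtain ⟨k, hA, hB⟩ := hco.exists_eq_mul_of_mul_eq h
  have hk : k ≠ 0 := by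
    rintro rfl
    exact hAB (Subset.antisymm (by simpa using hA) (by simpa using hB))
  have hcardA := card_sdiff_add_card_inter A B
  have hcardB := card_sdiff_add_card_inter B A
  rw [inter_comm] at hcardB
  calc #B + (q - p) = #(A ∩ B) + p * k + (q - p) := by omega
    _ ≤ #(A ∩ B) + p * k + (q - p) * k := by gcongr; exact Nat.le_mul_of_pos_right _ (by omega)
    _ = #A := by
      have := Nat.mul_le_mul_right k hpq
      rw [← hcardA, hA, Nat.sub_mul]
      omega

theorem stmt_8_general (p q : ℕ) (hco : Nat.Coprime p q)
    (n t : ℕ) (𝒜 : Finset (Finset (Fin n)))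
    (hcard : ∀ A ∈ 𝒜, A.card ∈ Finset.Ico t (t + (q - p))) :
    ∀ A ∈ 𝒜, ∀ B ∈ 𝒜, A ≠ B → p * (A \ B).card ≠ q * (B \ A).card := by
  intro A hA B hB hAB h
  have hA := mem_Ico.1 (hcard A hA)
  have hB := mem_Ico.1 (hcard B hB)
  have := card_add_sub_le_card_of_mul_card_sdiff_eq hco (by omega) hAB h
  omega

theorem stmt_8 (p q : ℕ) (hp : 0 < p) (hpq : p < q) (hco : Nat.Coprime p q)
    (n t : ℕ) (𝒜 : Finset (Finset (Fin n)))
    (hcard : ∀ A ∈ 𝒜, A.card ∈ Finset.Ico t (t + (q - p))) :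
    ∀ A ∈ 𝒜, ∀ B ∈ 𝒜, A ≠ B → p * (A \ B).card ≠ q * (B \ A).card :=
  stmt_8_general p q hco n t 𝒜 hcard
end

section
/- Let A be a family of subsets of {1,...,n} such that |A \ B| ≠ 1 for all distinct A, B in A. Then for every i with n/3 ≤ i ≤ 2n/3, the number of members of A of size exactly i is at most (3/n)·C(n, i+1), and in particular at most (9/n)·C(n,i) (for i+1 ≤ 2n/3 + 1). -/
theorem stmt_13 (n : ℕ) (𝒜 : Finset (Finset (Fin n)))
    (h : ∀ A ∈ 𝒜, ∀ B ∈ 𝒜, A ≠ B → (A \ B).card ≠ 1)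
    (i : ℕ) (hi₁ : n ≤ 3 * i) (hi₂ : 3 * i ≤ 2 * n) :
    n * (𝒜.filter (fun s => s.card = i)).card ≤ 3 * n.choose (i + 1) ∧
    n * (𝒜.filter (fun s => s.card = i)).card ≤ 9 * n.choose i := by
  set 𝒜i := 𝒜.filter (fun s => s.card = i) with h𝒜i
  set f : Finset (Fin n) → Finset (Finset (Fin n)) :=
    fun A => Aᶜ.image (fun x => insert x A) with hf
  have hmem : ∀ A ∈ 𝒜i, ∀ S ∈ f A, A ⊆ S ∧ S.card = i + 1 := by
    intro A hA S hS
    simp only [hf, Finset.mem_image, Finset.mem_compl] at hS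
    obtain ⟨x, hx, rfl⟩ := hS
    have hAc : A.card = i := (Finset.mem_filter.mp hA).2
    exact ⟨Finset.subset_insert _ _, by rw [Finset.card_insert_of_notMem hx, hAc]⟩
  have hdisj : ∀ A ∈ 𝒜i, ∀ B ∈ 𝒜i, A ≠ B → Disjoint (f A) (f B) := by
    intro A hA B hB hAB
    rw [Finset.disjoint_left]
    intro S hSA hSB
    obtain ⟨hAS, hScard⟩ := hmem A hA S hSA
    obtain ⟨hBS, _⟩ := hmem B hB S hSB
    have hAc : A.card = i := (Finset.mem_filter.mp hA).2
    have hBc : B.card = i := (Finset.mem_filter.mp hB).2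
    apply h A (Finset.mem_filter.mp hA).1 B (Finset.mem_filter.mp hB).1 hAB
    have h1 : (S \ B).card = 1 := by
      rw [Finset.card_sdiff_of_subset hBS, hScard, hBc]; omega
    have h2 : (A \ B).card ≤ 1 :=
      h1 ▸ Finset.card_le_card (Finset.sdiff_subset_sdiff hAS le_rfl)
    have h3 : 0 < (A \ B).card := by
      rw [Finset.card_pos, Finset.sdiff_nonempty]
      intro hsub
      exact hAB (Finset.eq_of_subset_of_card_le hsub (by omega))
    omega
  have hcardf : ∀ A ∈ 𝒜i, (f A).card = n - i := by
    intro A hA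
    have hAc : A.card = i := (Finset.mem_filter.mp hA).2
    have hinj : Set.InjOn (fun x => insert x A) ↑Aᶜ := by
      intro x hx y hy hxy
      simp only [Finset.coe_compl, Set.mem_compl_iff, Finset.mem_coe] at hx hy
      simp only at hxy
      have : x ∈ insert y A := hxy ▸ Finset.mem_insert_self x A
      rcases Finset.mem_insert.mp this with h' | h'
      · exact h'
      · exact absurd h' hx
    rw [hf]
    simp only
    rw [Finset.card_image_of_injOn hinj, Finset.card_compl, hAc, Fintype.card_fin]
  have hsub : 𝒜i.biUnion f ⊆ Finset.univ.powersetCard (i + 1) := by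
    intro S hS
    obtain ⟨A, hA, hSA⟩ := Finset.mem_biUnion.mp hS
    exact Finset.mem_powersetCard.mpr ⟨Finset.subset_univ _, (hmem A hA S hSA).2⟩
  have hkey : (n - i) * 𝒜i.card ≤ n.choose (i + 1) := by
    have h1 : (𝒜i.biUnion f).card = ∑ A ∈ 𝒜i, (f A).card :=
      Finset.card_biUnion hdisj
    have h2 : ∑ A ∈ 𝒜i, (f A).card = (n - i) * 𝒜i.card := by
      rw [Finset.sum_congr rfl hcardf, Finset.sum_const, smul_eq_mul, mul_comm]
    have h3 : (𝒜i.biUnion f).card ≤ (Finset.univ.powersetCard (i + 1)).card :=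
      Finset.card_le_card hsub
    rw [Finset.card_powersetCard, Finset.card_univ, Fintype.card_fin] at h3
    omega
  have hni : n ≤ 3 * (n - i) := by omega
  have hfirst : n * 𝒜i.card ≤ 3 * n.choose (i + 1) :=
    calc n * 𝒜i.card ≤ 3 * (n - i) * 𝒜i.card := by
          exact Nat.mul_le_mul_right _ hni
      _ = 3 * ((n - i) * 𝒜i.card) := by ring
      _ ≤ 3 * n.choose (i + 1) := Nat.mul_le_mul_left _ hkey
  refine ⟨hfirst, ?_⟩
  have hch : n.choose (i + 1) ≤ 3 * n.choose i := by
    have heq : n.choose (i + 1) * (i + 1) = n.choose i * (n - i) :=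
      Nat.choose_succ_right_eq n i
    have hle : n.choose i * (n - i) ≤ 3 * n.choose i * (i + 1) := by
      have : n - i ≤ 3 * (i + 1) := by omega
      calc n.choose i * (n - i) ≤ n.choose i * (3 * (i + 1)) :=
            Nat.mul_le_mul_left _ this
        _ = 3 * n.choose i * (i + 1) := by ring
    have := heq ▸ hle
    exact Nat.le_of_mul_le_mul_right this (Nat.succ_pos i)
  calc n * 𝒜i.card ≤ 3 * n.choose (i + 1) := hfirst
    _ ≤ 3 * (3 * n.choose i) := Nat.mul_le_mul_left _ hch
    _ = 9 * n.choose i := by ring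
end

section
/- There exists a constant C (independent of n) such that: for all n, any family A of subsets of {1,...,n} with |A \ B| ≠ 1 for all distinct A, B in A satisfies |A| ≤ (C/n)·2^n. -/
/-!
Flipping one element of a member of such a family never lands back in the family, so the shadow
`∂𝒜` and the upper shadow `∂⁺𝒜` are disjoint from `𝒜`. Two members with a common lower (or upper)
neighbour differ by at most one element each way, hence coincide; so every non-member has at most
one neighbour in `𝒜` below it and one above it, and `n · #𝒜 = #∂𝒜 + #∂⁺𝒜 ≤ 2 · 2ⁿ`.
-/

open Finset
open scoped FinsetFamily

variable {α : Type*} [DecidableEq α]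

def UnitDiffFree (𝒜 : Finset (Finset α)) : Prop :=
  ∀ A ∈ 𝒜, ∀ B ∈ 𝒜, A ≠ B → #(A \ B) ≠ 1

namespace UnitDiffFree

variable {𝒜 : Finset (Finset α)} {A B : Finset α} {a b : α}

lemma sdiff_eq_empty_of_erase_subset (h : UnitDiffFree 𝒜) (hA : A ∈ 𝒜) (hB : B ∈ 𝒜)
    (hAB : A.erase a ⊆ B) : A \ B = ∅ := by
  rcases eq_or_ne A B with rfl | hne
  · exact Finset.sdiff_self A
  have hsub : A \ B ⊆ {a} := fun x hx => by
    rw [mem_sdiff] at hx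
    by_contra hxa
    exact hx.2 (hAB (mem_erase.2 ⟨notMem_singleton.1 hxa, hx.1⟩))
  have hcard : #(A \ B) ≤ 1 := (card_le_card hsub).trans_eq (card_singleton a)
  exact card_eq_zero.1 ((Nat.le_one_iff_eq_zero_or_eq_one.1 hcard).resolve_right (h A hA B hB hne))

lemma eq_of_erase_subset (h : UnitDiffFree 𝒜) (hA : A ∈ 𝒜) (hB : B ∈ 𝒜)
    (hAB : A.erase a ⊆ B) (hBA : B.erase b ⊆ A) : A = B :=
  (sdiff_eq_empty_iff_subset.1 (h.sdiff_eq_empty_of_erase_subset hA hB hAB)).antisymm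
    (sdiff_eq_empty_iff_subset.1 (h.sdiff_eq_empty_of_erase_subset hB hA hBA))

lemma erase_notMem (h : UnitDiffFree 𝒜) (hA : A ∈ 𝒜) (ha : a ∈ A) : A.erase a ∉ 𝒜 :=
  fun hmem => h A hA _ hmem (erase_ne_self.2 ha).symm (by rw [sdiff_erase_self ha, card_singleton])

lemma insert_notMem (h : UnitDiffFree 𝒜) (hA : A ∈ 𝒜) (ha : a ∉ A) : insert a A ∉ 𝒜 :=
  fun hmem => h _ hmem A hA (insert_ne_self.2 ha) (by rw [insert_sdiff_cancel ha, card_singleton])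

lemma disjoint_shadow (h : UnitDiffFree 𝒜) : Disjoint 𝒜 (∂ 𝒜) := by
  refine disjoint_right.2 fun t ht => ?_
  obtain ⟨A, hA, a, ha, rfl⟩ := mem_shadow_iff.1 ht
  exact h.erase_notMem hA ha

lemma disjoint_upShadow [Fintype α] (h : UnitDiffFree 𝒜) : Disjoint 𝒜 (∂⁺ 𝒜) := by
  refine disjoint_right.2 fun t ht => ?_
  obtain ⟨A, hA, a, ha, rfl⟩ := mem_upShadow_iff.1 ht
  exact h.insert_notMem hA ha

lemma card_shadow (h : UnitDiffFree 𝒜) : #(∂ 𝒜) = ∑ A ∈ 𝒜, #A := by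
  rw [shadow, sup_eq_biUnion, card_biUnion]
  · exact sum_congr rfl fun A _ => card_image_of_injOn A.erase_injOn
  intro A hA B hB hne
  refine disjoint_left.2 fun t htA htB => hne ?_
  obtain ⟨a, -, rfl⟩ := mem_image.1 htA
  obtain ⟨b, -, hba⟩ := mem_image.1 htB
  exact h.eq_of_erase_subset hA hB (hba ▸ erase_subset b B) (hba ▸ erase_subset a A)

lemma card_upShadow [Fintype α] (h : UnitDiffFree 𝒜) : #(∂⁺ 𝒜) = ∑ A ∈ 𝒜, #Aᶜ := by
  rw [upShadow, sup_eq_biUnion, card_biUnion]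
  · exact sum_congr rfl fun A _ => card_image_of_injOn (insert_inj_on' A)
  intro A hA B hB hne
  refine disjoint_left.2 fun t htA htB => hne ?_
  obtain ⟨a, -, rfl⟩ := mem_image.1 htA
  obtain ⟨b, -, hba⟩ := mem_image.1 htB
  exact h.eq_of_erase_subset hA hB (subset_insert_iff.1 (hba ▸ subset_insert a A))
    (subset_insert_iff.1 (hba ▸ subset_insert b B))

lemma card_mul_card_le [Fintype α] (h : UnitDiffFree 𝒜) :
    #𝒜 * Fintype.card α ≤ 2 * #𝒜ᶜ :=
  calc #𝒜 * Fintype.card α = ∑ A ∈ 𝒜, (#A + #Aᶜ) := by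
        simp only [card_add_card_compl, sum_const, smul_eq_mul]
    _ = #(∂ 𝒜) + #(∂⁺ 𝒜) := by rw [sum_add_distrib, h.card_shadow, h.card_upShadow]
    _ ≤ #𝒜ᶜ + #𝒜ᶜ := add_le_add (card_le_card (subset_compl_iff_disjoint_left.2 h.disjoint_shadow))
        (card_le_card (subset_compl_iff_disjoint_left.2 h.disjoint_upShadow))
    _ = 2 * #𝒜ᶜ := (two_mul _).symm

end UnitDiffFree

theorem stmt_15 :
    ∃ C : ℝ, ∀ n : ℕ, ∀ 𝒜 : Finset (Finset (Fin n)),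
      (∀ A ∈ 𝒜, ∀ B ∈ 𝒜, A ≠ B → (A \ B).card ≠ 1) →
      (𝒜.card : ℝ) * n ≤ C * 2 ^ n := by
  refine ⟨2, fun n 𝒜 h𝒜 => ?_⟩
  have hcount : #𝒜 * n ≤ 2 * 2 ^ n :=
    calc #𝒜 * n = #𝒜 * Fintype.card (Fin n) := by rw [Fintype.card_fin]
      _ ≤ 2 * #𝒜ᶜ := UnitDiffFree.card_mul_card_le h𝒜
      _ ≤ 2 * 2 ^ n := by
        gcongr
        simpa using card_le_univ 𝒜ᶜ
  exact_mod_cast hcount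
end

section
/- Let n be prime and k ≥ 1, and let A*_k be the family of all ⌊n/2⌋-element subsets A of {1,...,n} such that Σ_{i∈A} i^d ≡ 0 (mod n) for all 1 ≤ d ≤ k. Then A*_k satisfies |A \ B| > k for all distinct A, B in A*_k. -/
/-!
If `#(A \ B) ≤ k`, then `A \ B` and `B \ A` have equal size and, mapped to `ZMod n` by `i ↦ i + 1`,
equal power sums of degrees `1, …, #(A \ B)`. Since `#(A \ B) < n`, Newton's identities can be
solved for the elementary symmetric functions, so both sets are the roots of the same polynomial
`∏ (X - a)`; thus `A \ B = B \ A`, forcing `A = B`.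
-/

open Finset

theorem Multiset.mul_esymm_eq_sum {R : Type*} [CommRing R] (s : Multiset R) (k : ℕ) :
    k * s.esymm k = (-1) ^ (k + 1) *
      ∑ a ∈ HasAntidiagonal.antidiagonal k with a.1 < k,
        (-1) ^ a.1 * s.esymm a.1 * (s.map (· ^ a.2)).sum := by
  classical
  let x : s → R := fun i ↦ (i : R)
  have esymm_eval (j : ℕ) : MvPolynomial.aeval x (MvPolynomial.esymm s R j) = s.esymm j := by
    rw [MvPolynomial.aeval_esymm_eq_multiset_esymm, map_univ_coe]
  have psum_eval (j : ℕ) :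
      MvPolynomial.aeval x (MvPolynomial.psum s R j) = (s.map (· ^ j)).sum := by
    rw [MvPolynomial.psum, map_sum, Finset.sum_eq_multiset_sum]
    conv_rhs => rw [← map_univ_coe s, Multiset.map_map]
    simp only [map_pow, MvPolynomial.aeval_X, Function.comp_def, x]
  have newton := congrArg (MvPolynomial.aeval x) (MvPolynomial.mul_esymm_eq_sum s R k)
  simpa only [map_mul, map_natCast, map_pow, map_neg, map_one, map_sum, esymm_eval, psum_eval]
    using newton

namespace Multiset

variable {R : Type*} [CommRing R] [IsDomain R] {s t : Multiset R} {m : ℕ}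

theorem esymm_eq_of_sum_map_pow_eq (hchar : ∀ d, 1 ≤ d → d ≤ m → (d : R) ≠ 0)
    (hpow : ∀ d, 1 ≤ d → d ≤ m → (s.map (· ^ d)).sum = (t.map (· ^ d)).sum) :
    ∀ d ≤ m, s.esymm d = t.esymm d := by
  intro d
  induction d using Nat.strong_induction_on with
  | _ d ih =>
    intro hdm
    rcases Nat.eq_zero_or_pos d with rfl | hd
    · simp [esymm]
    refine mul_left_cancel₀ (hchar d hd hdm) ?_
    rw [mul_esymm_eq_sum, mul_esymm_eq_sum]
    congr 1
    refine Finset.sum_congr rfl fun a ha => ?_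
    rw [Finset.mem_filter, HasAntidiagonal.mem_antidiagonal] at ha
    rw [ih a.1 ha.2 (by omega), hpow a.2 (by omega) (by omega)]

theorem eq_of_sum_map_pow_eq (hs : card s = m) (ht : card t = m)
    (hchar : ∀ d, 1 ≤ d → d ≤ m → (d : R) ≠ 0)
    (hpow : ∀ d, 1 ≤ d → d ≤ m → (s.map (· ^ d)).sum = (t.map (· ^ d)).sum) :
    s = t := by
  have hprod : (s.map fun a => Polynomial.X - Polynomial.C a).prod
      = (t.map fun a => Polynomial.X - Polynomial.C a).prod := by
    rw [prod_X_sub_X_eq_sum_esymm, prod_X_sub_X_eq_sum_esymm, hs, ht]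
    refine Finset.sum_congr rfl fun j hj => ?_
    rw [esymm_eq_of_sum_map_pow_eq hchar hpow j (Nat.lt_succ_iff.mp (mem_range.mp hj))]
  simpa only [Polynomial.roots_multiset_prod_X_sub_C] using congrArg Polynomial.roots hprod

end Multiset

theorem Finset.eq_of_card_sdiff_le_of_sum_pow_eq {ι R : Type*} [DecidableEq ι] [CommRing R]
    [IsDomain R] {f : ι → R} (hf : Function.Injective f) {A B : Finset ι} {k : ℕ}
    (hcard : #A = #B) (hchar : ∀ d, 1 ≤ d → d ≤ #(A \ B) → (d : R) ≠ 0)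
    (hpow : ∀ d, 1 ≤ d → d ≤ k → ∑ i ∈ A, f i ^ d = ∑ i ∈ B, f i ^ d)
    (hk : #(A \ B) ≤ k) : A = B := by
  have hsdiff : ∀ d, 1 ≤ d → d ≤ #(A \ B) →
      (((A \ B).val.map f).map (· ^ d)).sum = (((B \ A).val.map f).map (· ^ d)).sum := by
    intro d hd hdm
    have hA := sum_inter_add_sum_sdiff A B (f · ^ d)
    have hB := sum_inter_add_sum_sdiff B A (f · ^ d)
    rw [inter_comm, hpow d hd (hdm.trans hk), ← hB] at hA
    simpa [Multiset.map_map, Function.comp_def, sum_eq_multiset_sum] using add_left_cancel hA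
  have hmap := Multiset.eq_of_sum_map_pow_eq (by rw [Multiset.card_map, card_val])
    (by rw [Multiset.card_map, card_val, card_sdiff_comm hcard.symm]) hchar hsdiff
  have hswap : A \ B = B \ A := val_injective (Multiset.map_injective hf hmap)
  have hempty : A \ B = ∅ := by
    simpa [hswap] using (disjoint_sdiff_sdiff : Disjoint (A \ B) (B \ A))
  exact eq_of_subset_of_card_le (sdiff_eq_empty_iff_subset.mp hempty) hcard.ge

theorem ZMod.natCast_add_one_injective (n : ℕ) :
    Function.Injective fun i : Fin n ↦ ((i : ℕ) : ZMod n) + 1 := by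
  intro i j hij
  have := (ZMod.natCast_eq_natCast_iff' i j n).mp (add_right_cancel hij)
  rwa [Nat.mod_eq_of_lt i.isLt, Nat.mod_eq_of_lt j.isLt, Fin.val_inj] at this

theorem stmt_19_general (n k : ℕ) (hn : n.Prime)
    (A B : Finset (Fin n))
    (hAcard : A.card = n / 2) (hBcard : B.card = n / 2)
    (hAsum : ∀ d, 1 ≤ d → d ≤ k → (∑ i ∈ A, ((i : ℕ) + 1) ^ d) % n = 0)
    (hBsum : ∀ d, 1 ≤ d → d ≤ k → (∑ i ∈ B, ((i : ℕ) + 1) ^ d) % n = 0)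
    (hAB : A ≠ B) :
    k < (A \ B).card := by
  have : Fact n.Prime := ⟨hn⟩
  have sum_eq_zero {S : Finset (Fin n)} {d : ℕ} (h : (∑ i ∈ S, ((i : ℕ) + 1) ^ d) % n = 0) :
      ∑ i ∈ S, (((i : ℕ) : ZMod n) + 1) ^ d = 0 := by
    simpa [ZMod.natCast_mod] using congrArg (Nat.cast : ℕ → ZMod n) h
  have hchar (d : ℕ) (hd : 1 ≤ d) (hdA : d ≤ #(A \ B)) : (d : ZMod n) ≠ 0 := by
    have : #(A \ B) < n := (card_le_card sdiff_subset).trans_lt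
      (hAcard ▸ Nat.div_lt_self hn.pos one_lt_two)
    rw [Ne, ZMod.natCast_eq_zero_iff]
    exact fun hdvd => (Nat.le_of_dvd hd hdvd).not_gt (hdA.trans_lt this)
  by_contra! hle
  refine hAB (eq_of_card_sdiff_le_of_sum_pow_eq (ZMod.natCast_add_one_injective n)
    (hAcard.trans hBcard.symm) hchar (fun d h1 h2 => ?_) hle)
  rw [sum_eq_zero (hAsum d h1 h2), sum_eq_zero (hBsum d h1 h2)]

theorem stmt_19 (n k : ℕ) (hn : n.Prime) (hk : 1 ≤ k)
    (A B : Finset (Fin n))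
    (hAcard : A.card = n / 2) (hBcard : B.card = n / 2)
    (hAsum : ∀ d, 1 ≤ d → d ≤ k → (∑ i ∈ A, ((i : ℕ) + 1) ^ d) % n = 0)
    (hBsum : ∀ d, 1 ≤ d → d ≤ k → (∑ i ∈ B, ((i : ℕ) + 1) ^ d) % n = 0)
    (hAB : A ≠ B) :
    k < (A \ B).card :=
  stmt_19_general n k hn A B hAcard hBcard hAsum hBsum hAB
end
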